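/- For every finitely generated nonzero fractional ideal F of D, F^⋆ = F^b; that is, the star operation ⋆ defined by 𝒮 agrees with the b-operation on finitely generated fractional ideals. -/

import Mathlib

open MvPolynomial FractionalIdeal

noncomputable section

variable (k : Type*) [Field k]

/-- The ideal `N = (X_1, X_2, ...)` of `R = k[X_1, X_2, ...]` generated by all the
indeterminates. -/
def bigN : Ideal (MvPolynomial ℕ k) := Ideal.span (Set.range MvPolynomial.X)

theorem bigN_eq_ker : bigN k = RingHom.ker (constantCoeff (σ := ℕ) (R := k)) := by
  ext p
  rw [bigN, ← Set.image_univ, mem_ideal_span_X_image, RingHom.mem_ker]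
  constructor
  · intro h
    rw [constantCoeff_eq]
    by_contra hc
    obtain ⟨i, _, hi⟩ := h 0 (mem_support_iff.mpr hc)
    simp at hi
  · intro h m hm
    rw [constantCoeff_eq] at h
    have hm0 : m ≠ 0 := by rintro rfl; exact mem_support_iff.mp hm h
    obtain ⟨i, hi⟩ := Finsupp.ne_iff.mp hm0
    exact ⟨i, trivial, by simpa using hi⟩

instance : (bigN k).IsMaximal := by
  rw [bigN_eq_ker]
  exact RingHom.ker_isMaximal_of_surjective _ (fun a => ⟨C a, by simp⟩)

/-- `D`, the localization of `k[X_1, X_2, ...]` at the maximal ideal `N`. -/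
abbrev bigD := Localization.AtPrime (bigN k)

/-- `K`, the fraction field of `D`. -/
abbrev bigK := FractionRing (bigD k)

instance : Module (bigD k) (bigK k) := Algebra.toModule

/-- `M`, the maximal ideal of the local domain `D`. -/
def bigM : Ideal (bigD k) := IsLocalRing.maximalIdeal (bigD k)

open Pointwise

/-- The maximal ideal `M` of `D`, viewed as a fractional ideal of `D`. -/
def bigMF : FractionalIdeal (nonZeroDivisors (bigD k)) (bigK k) :=
  ((bigM k : Ideal (bigD k)) : FractionalIdeal (nonZeroDivisors (bigD k)) (bigK k))

/-- The `b`-operation: `E^b = ⋂ EV`, the intersection over all valuation overrings `V` of `D`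
of the `V`-submodule of `K` generated by `E` (viewed as a `D`-submodule of `K`). -/
def bOp (E : Submodule (bigD k) (bigK k)) : Submodule (bigD k) (bigK k) :=
  sInf {J | ∃ V : ValuationSubring (bigK k),
    (∀ d : bigD k, algebraMap (bigD k) (bigK k) d ∈ V) ∧
    J = Submodule.span (bigD k) ((E : Set (bigK k)) * (V : Set (bigK k)))}

/-- The set `𝒮` of all fractional ideals of `D` of the form `xF^b` (with `x ∈ K` nonzero and
`F` a finitely generated nonzero fractional ideal of `D`) or `yM` (with `y ∈ K` nonzero),
viewed as `D`-submodules of `K`. -/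
def Sset : Set (Submodule (bigD k) (bigK k)) :=
  {J | (∃ x : bigK k, x ≠ 0 ∧
          ∃ F : FractionalIdeal (nonZeroDivisors (bigD k)) (bigK k), F ≠ 0 ∧
            (F : Submodule (bigD k) (bigK k)).FG ∧
            J = Submodule.span (bigD k) {x} * bOp k (F : Submodule (bigD k) (bigK k))) ∨
       (∃ y : bigK k, y ≠ 0 ∧
          J = Submodule.span (bigD k) {y} * (bigMF k : Submodule (bigD k) (bigK k)))}

/-- The operation `E^⋆ := ⋂ {J ∈ 𝒮 : E ⊆ J}`. -/
def starS (E : Submodule (bigD k) (bigK k)) : Submodule (bigD k) (bigK k) :=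
  sInf {J | J ∈ Sset k ∧ E ≤ J}

/-!
`F^⋆ ≤ F^b` because `F^b = 1 · F^b` is itself a member of `𝒮` containing `F`. Conversely, every
member of `𝒮` has the form `x G^b`: for `yM` this is because `M` is `b`-closed. Indeed, `M^b`
lies in every valuation overring, hence in the integrally closed domain `D`, and a valuation ring
dominating `D` puts it in its maximal ideal, whose trace on `D` is `M`. Finally `F ⊆ x G^b`
forces `F^b ⊆ x G^b`, since for each valuation overring `V` the module `x (GV)` contains `F` and
is stable under multiplication by `V`, so it contains `FV`.
-/

open IsLocalRing Submodule

section bClosure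

variable {A K : Type*} [CommRing A] [Field K] [Algebra A K]

def ValuationSubring.toSubalgebra (V : ValuationSubring K) (hV : ∀ a, algebraMap A K a ∈ V) :
    Subalgebra A K :=
  { V.toSubring with algebraMap_mem' := hV }

def bClosure (E : Submodule A K) : Submodule A K :=
  ⨅ (V : ValuationSubring K) (hV : ∀ a, algebraMap A K a ∈ V),
    E * (V.toSubalgebra hV).toSubmodule

lemma mem_bClosure_iff {E : Submodule A K} {z : K} :
    z ∈ bClosure E ↔ ∀ (V : ValuationSubring K) (hV : ∀ a, algebraMap A K a ∈ V),
      z ∈ E * (V.toSubalgebra hV).toSubmodule := by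
  simp only [bClosure, mem_iInf]

lemma bClosure_le_mul (E : Submodule A K) (V : ValuationSubring K)
    (hV : ∀ a, algebraMap A K a ∈ V) : bClosure E ≤ E * (V.toSubalgebra hV).toSubmodule :=
  iInf₂_le V hV

lemma le_bClosure (E : Submodule A K) : E ≤ bClosure E :=
  le_iInf₂ fun V hV ↦ le_mul_of_one_le_right' (one_le.mpr (V.toSubalgebra hV).one_mem)

lemma bClosure_le_span_singleton_mul {F G : Submodule A K} {x : K} (hx : x ≠ 0)
    (h : F ≤ span A {x} * bClosure G) : bClosure F ≤ span A {x} * bClosure G := by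
  intro z hz
  rw [span_singleton_mul, mem_smul_iff_inv_mul_mem hx, mem_bClosure_iff]
  intro V hV
  set W := (V.toSubalgebra hV).toSubmodule
  have hFW : F * W ≤ span A {x} * (G * W) := calc
    F * W ≤ span A {x} * bClosure G * W := mul_le_mul_left h W
    _ ≤ span A {x} * (G * W) * W :=
      mul_le_mul_left (mul_le_mul_right (bClosure_le_mul G V hV) _) W
    _ = span A {x} * (G * W) := by
      rw [mul_assoc, mul_assoc, (V.toSubalgebra hV).isIdempotentElem_toSubmodule.eq]
  have hzW := hFW (mem_bClosure_iff.1 hz V hV)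
  rwa [span_singleton_mul, mem_smul_iff_inv_mul_mem hx] at hzW

lemma IsIntegrallyClosed.exists_algebraMap_eq_of_forall_mem_valuationSubring
    [IsIntegrallyClosed A] [IsFractionRing A K] {z : K}
    (h : ∀ V : ValuationSubring K, (∀ a, algebraMap A K a ∈ V) → z ∈ V) :
    ∃ a, algebraMap A K a = z := by
  refine IsIntegrallyClosed.isIntegral_iff.1 (of_not_not fun hz ↦ ?_)
  obtain ⟨V, hAV, hzV⟩ := Subring.exists_le_valuationSubring_of_isIntegrallyClosedIn
    (R := (integralClosure A K).toSubring) hz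
  exact hzV (h V fun a ↦ hAV ((integralClosure A K).algebraMap_mem a))

lemma ValuationSubring.mul_mem_nonunits (V : ValuationSubring K) {x y : K} (hx : x ∈ V)
    (hy : y ∈ V.nonunits) : x * y ∈ V.nonunits := by
  rw [mem_nonunits_iff] at hy ⊢
  rw [map_mul]
  exact (mul_le_of_le_one_left' ((V.valuation_le_one_iff x).2 hx)).trans_lt hy

lemma ValuationSubring.algebraMap_mem_nonunits_iff [IsLocalRing A] {V : ValuationSubring K}
    (hV : ∀ a, algebraMap A K a ∈ V) [IsLocalHom ((algebraMap A K).codRestrict V.toSubring hV)]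
    (a : A) : algebraMap A K a ∈ V.nonunits ↔ a ∈ maximalIdeal A :=
  (V.coe_mem_nonunits_iff (a := (algebraMap A K).codRestrict V.toSubring hV a)).trans
    (map_mem_nonunits_iff _ a)

lemma ValuationSubring.mem_nonunits_of_mem_coeSubmodule_maximalIdeal_mul [IsLocalRing A]
    {V : ValuationSubring K} (hV : ∀ a, algebraMap A K a ∈ V)
    [IsLocalHom ((algebraMap A K).codRestrict V.toSubring hV)] {z : K}
    (hz : z ∈ IsLocalization.coeSubmodule K (maximalIdeal A) * (V.toSubalgebra hV).toSubmodule) :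
    z ∈ V.nonunits := by
  refine Submodule.mul_induction_on hz (fun m hm v hv ↦ ?_) fun _ _ ↦ V.nonunits.add_mem
  obtain ⟨a, ha, rfl⟩ := (IsLocalization.mem_coeSubmodule _ _).1 hm
  rw [mul_comm]
  exact V.mul_mem_nonunits hv ((V.algebraMap_mem_nonunits_iff hV a).2 ha)

theorem bClosure_coeSubmodule_maximalIdeal [IsLocalRing A] [IsIntegrallyClosed A]
    [IsFractionRing A K] :
    bClosure (IsLocalization.coeSubmodule K (maximalIdeal A)) =
      IsLocalization.coeSubmodule K (maximalIdeal A) := by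
  refine le_antisymm (fun z hz ↦ ?_) (le_bClosure _)
  have hzV : ∀ V : ValuationSubring K, (∀ a, algebraMap A K a ∈ V) → z ∈ V := fun V hV ↦ by
    have hz1 := mul_le_mul_left ((IsLocalization.coeSubmodule_mono K le_top).trans_eq
      (IsLocalization.coeSubmodule_top (S := K))) _ (mem_bClosure_iff.1 hz V hV)
    rwa [one_mul] at hz1
  obtain ⟨a, rfl⟩ := IsIntegrallyClosed.exists_algebraMap_eq_of_forall_mem_valuationSubring hzV
  obtain ⟨V, hV, _⟩ := IsLocalRing.exists_factor_valuationRing (algebraMap A K)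
  have ha := V.mem_nonunits_of_mem_coeSubmodule_maximalIdeal_mul hV (mem_bClosure_iff.1 hz V hV)
  exact (IsLocalization.mem_coeSubmodule _ _).2 ⟨a, (V.algebraMap_mem_nonunits_iff hV a).1 ha, rfl⟩

end bClosure

/- The `Algebra (bigD k) (bigK k)` instance found by unification is the lift from
`Localization.AtPrime`, not the one `FractionRing` carries, so `IsFractionRing` has to be
transported along their (propositional) equality. -/
instance : IsFractionRing (bigD k) (bigK k) := by
  convert (Localization.isLocalization :
    @IsFractionRing (bigD k) _ (bigK k) _ OreLocalization.instAlgebra)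
  exact Algebra.algebra_ext _ _ <| RingHom.congr_fun <|
    IsLocalization.ringHom_ext (bigN k).primeCompl <| IsLocalization.lift_comp _

section

variable {k}

lemma bOp_eq_bClosure (E : Submodule (bigD k) (bigK k)) : bOp k E = bClosure E :=
  le_antisymm (le_iInf₂ fun V hV ↦ sInf_le ⟨V, hV, mul_eq_span_mul_set _ _⟩) <| le_sInf <| by
    rintro _ ⟨V, hV, rfl⟩
    exact (bClosure_le_mul E V hV).trans_eq (mul_eq_span_mul_set _ _)

lemma coe_bigMF : (bigMF k : Submodule (bigD k) (bigK k)) =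
    IsLocalization.coeSubmodule (bigK k) (maximalIdeal (bigD k)) :=
  FractionalIdeal.coe_coeIdeal _

end

/-- For every finitely generated nonzero fractional ideal `F` of `D`, `F^⋆ = F^b`. -/
theorem starS_eq_bOp_on_fg (F : FractionalIdeal (nonZeroDivisors (bigD k)) (bigK k))
    (hF : F ≠ 0) (hFG : (F : Submodule (bigD k) (bigK k)).FG) :
    starS k (F : Submodule (bigD k) (bigK k)) = bOp k (F : Submodule (bigD k) (bigK k)) := by
  rw [bOp_eq_bClosure]
  refine le_antisymm (sInf_le ⟨.inl ⟨1, one_ne_zero, F, hF, hFG, ?_⟩, le_bClosure _⟩) (le_sInf ?_)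
  · rw [bOp_eq_bClosure, ← one_eq_span, one_mul]
  rintro J ⟨⟨x, hx, G, -, -, rfl⟩ | ⟨y, hy, rfl⟩, hFJ⟩
  · rw [bOp_eq_bClosure] at hFJ ⊢
    exact bClosure_le_span_singleton_mul hx hFJ
  · rw [coe_bigMF, ← bClosure_coeSubmodule_maximalIdeal] at hFJ ⊢
    exact bClosure_le_span_singleton_mul hy hFJ
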